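/- arXiv:2404.03037 — 2 statements merged into one kernel-verified Lean document; each statement's English description precedes it below -/
import Mathlib

section
/- Let H ≥ 1 be a natural number and let ε_R, ε_T, L_RS, L_RK, L_RZ, L_TZ, L_TK, Δ_ω, Δ_k ≥ 0 and 0 ≤ L_TS < 1 be real numbers. Let δ : ℕ → ℝ satisfy δ(t) ∈ {0,1} for all t, set m = Σ_{t=1}^{H} δ(t), and let r : ℕ → ℝ satisfy, for every t with 1 ≤ t ≤ H, r(t) ≤ ε_R + L_RK·δ(t) + L_RS · Σ_{i=0}^{t−2} L_TS^i · (ε_T + L_TZ·Δ_ω + (L_TZ·Δ_k + L_TK)·δ(t−1−i)) + L_RZ·(Δ_k + Δ_ω). Then Σ_{t=1}^{H} r(t) ≤ H·(ε_R + L_RZ·(Δ_k + Δ_ω)) + L_RK·m + (L_RS / (1 − L_TS)) · ( H·(ε_T + L_TZ·Δ_ω) + (L_TZ·Δ_k + L_TK)·m ). -/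
/-!
Summing the per-step bound over `t`, the only non-trivial term is the geometric convolution
`∑ₜ ∑_{i < t-1} L_TS^i f(t-1-i)` with `f = ε_T + L_TZ Δ_ω + (L_TZ Δ_k + L_TK) δ`. Exchanging the
two sums, every lag `i` contributes at most `L_TS^i ∑_{j ≤ H} f j`, and summing the geometric
weights gives the factor `1 / (1 - L_TS)`; finally `∑_{j ≤ H} f j = H (ε_T + L_TZ Δ_ω) +
(L_TZ Δ_k + L_TK) m`.
-/

open Finset

lemma sum_Icc_sub_le_sum_Icc {f : ℕ → ℝ} (hf : ∀ j, 0 ≤ f j) (k H : ℕ) :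
    ∑ t ∈ Icc (k + 2) H, f (t - 1 - k) ≤ ∑ j ∈ Icc 1 H, f j := by
  have hinj : Set.InjOn (fun t => t - 1 - k) (Icc (k + 2) H) := by
    intro a ha b hb hab
    simp only [coe_Icc, Set.mem_Icc] at ha hb hab
    omega
  rw [← sum_image hinj]
  refine sum_le_sum_of_subset_of_nonneg ?_ fun j _ _ => hf j
  intro j hj
  simp only [mem_image, mem_Icc] at hj ⊢
  omega

lemma geom_sum_mul_le {ρ c : ℝ} (hρ0 : 0 ≤ ρ) (hρ1 : ρ < 1) (hc : 0 ≤ c) (n : ℕ) :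
    ∑ i ∈ range n, ρ ^ i * c ≤ c / (1 - ρ) := by
  have h := geom_sum_Ico_le_of_lt_one (m := 0) (n := n) hρ0 hρ1
  rw [← range_eq_Ico, pow_zero] at h
  rw [← sum_mul, div_eq_mul_one_div, mul_comm c]
  exact mul_le_mul_of_nonneg_right h hc

theorem sum_Icc_geom_convolution_le {ρ : ℝ} (hρ0 : 0 ≤ ρ) (hρ1 : ρ < 1) {f : ℕ → ℝ}
    (hf : ∀ j, 0 ≤ f j) (H : ℕ) :
    ∑ t ∈ Icc 1 H, ∑ i ∈ range (t - 1), ρ ^ i * f (t - 1 - i)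
      ≤ (∑ j ∈ Icc 1 H, f j) / (1 - ρ) := by
  rw [sum_comm' (t' := range H) (s' := fun i => Icc (i + 2) H)
    fun t i => by simp only [mem_Icc, mem_range]; omega]
  calc ∑ i ∈ range H, ∑ t ∈ Icc (i + 2) H, ρ ^ i * f (t - 1 - i)
      = ∑ i ∈ range H, ρ ^ i * ∑ t ∈ Icc (i + 2) H, f (t - 1 - i) := by
        simp only [mul_sum]
    _ ≤ ∑ i ∈ range H, ρ ^ i * ∑ j ∈ Icc 1 H, f j := by
        gcongr with i
        exact sum_Icc_sub_le_sum_Icc hf i H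
    _ ≤ (∑ j ∈ Icc 1 H, f j) / (1 - ρ) :=
        geom_sum_mul_le hρ0 hρ1 (sum_nonneg fun j _ => hf j) H

theorem stmt_4_general (H : ℕ)
    (εR εT LRS LRK LRZ LTZ LTK Δω Δk LTS : ℝ)
    (hεT : 0 ≤ εT) (hLRS : 0 ≤ LRS)
    (hLTZ : 0 ≤ LTZ) (hLTK : 0 ≤ LTK)
    (hΔω : 0 ≤ Δω) (hΔk : 0 ≤ Δk) (hLTS0 : 0 ≤ LTS) (hLTS1 : LTS < 1)
    (δ : ℕ → ℝ) (hδ : ∀ t : ℕ, δ t = 0 ∨ δ t = 1)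
    (m : ℝ) (hm : m = ∑ t ∈ Finset.Icc 1 H, δ t)
    (r : ℕ → ℝ)
    (hr : ∀ t : ℕ, 1 ≤ t → t ≤ H →
      r t ≤ εR + LRK * δ t
        + LRS * ∑ i ∈ Finset.range (t - 1),
            LTS ^ i * (εT + LTZ * Δω + (LTZ * Δk + LTK) * δ (t - 1 - i))
        + LRZ * (Δk + Δω)) :
    ∑ t ∈ Finset.Icc 1 H, r t
      ≤ H * (εR + LRZ * (Δk + Δω)) + LRK * m
        + (LRS / (1 - LTS)) * (H * (εT + LTZ * Δω) + (LTZ * Δk + LTK) * m) := by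
  set f : ℕ → ℝ := fun j => εT + LTZ * Δω + (LTZ * Δk + LTK) * δ j
  have hf : ∀ j, 0 ≤ f j := fun j => by
    have : 0 ≤ δ j := by rcases hδ j with h | h <;> simp [h]
    positivity
  have hsum_f : ∑ j ∈ Icc 1 H, f j = H * (εT + LTZ * Δω) + (LTZ * Δk + LTK) * m := by
    simp only [f, sum_add_distrib, sum_const, Nat.card_Icc, Nat.add_sub_cancel, ← mul_sum, hm,
      nsmul_eq_mul]
    ring
  calc ∑ t ∈ Icc 1 H, r t
      ≤ ∑ t ∈ Icc 1 H, (εR + LRK * δ t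
          + LRS * ∑ i ∈ range (t - 1), LTS ^ i * f (t - 1 - i) + LRZ * (Δk + Δω)) :=
        sum_le_sum fun t ht => hr t (mem_Icc.mp ht).1 (mem_Icc.mp ht).2
    _ = H * (εR + LRZ * (Δk + Δω)) + LRK * m
          + LRS * ∑ t ∈ Icc 1 H, ∑ i ∈ range (t - 1), LTS ^ i * f (t - 1 - i) := by
        simp only [sum_add_distrib, sum_const, Nat.card_Icc, Nat.add_sub_cancel, ← mul_sum, hm,
          nsmul_eq_mul]
        ring
    _ ≤ H * (εR + LRZ * (Δk + Δω)) + LRK * m + LRS * ((∑ j ∈ Icc 1 H, f j) / (1 - LTS)) := by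
        gcongr
        exact sum_Icc_geom_convolution_le hLTS0 hLTS1 hf H
    _ = _ := by rw [hsum_f]; ring

/-- Arithmetic content of the main regret bound (Theorem 5.2) with discount
factor `γ = 1`: summing the per-step regret bound over the planning horizon `H`
yields the stated regret bound. -/
theorem stmt_4 (H : ℕ) (hH : 1 ≤ H)
    (εR εT LRS LRK LRZ LTZ LTK Δω Δk LTS : ℝ)
    (hεR : 0 ≤ εR) (hεT : 0 ≤ εT) (hLRS : 0 ≤ LRS) (hLRK : 0 ≤ LRK)
    (hLRZ : 0 ≤ LRZ) (hLTZ : 0 ≤ LTZ) (hLTK : 0 ≤ LTK)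
    (hΔω : 0 ≤ Δω) (hΔk : 0 ≤ Δk) (hLTS0 : 0 ≤ LTS) (hLTS1 : LTS < 1)
    (δ : ℕ → ℝ) (hδ : ∀ t : ℕ, δ t = 0 ∨ δ t = 1)
    (m : ℝ) (hm : m = ∑ t ∈ Finset.Icc 1 H, δ t)
    (r : ℕ → ℝ)
    (hr : ∀ t : ℕ, 1 ≤ t → t ≤ H →
      r t ≤ εR + LRK * δ t
        + LRS * ∑ i ∈ Finset.range (t - 1),
            LTS ^ i * (εT + LTZ * Δω + (LTZ * Δk + LTK) * δ (t - 1 - i))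
        + LRZ * (Δk + Δω)) :
    ∑ t ∈ Finset.Icc 1 H, r t
      ≤ H * (εR + LRZ * (Δk + Δω)) + LRK * m
        + (LRS / (1 - LTS)) * (H * (εT + LTZ * Δω) + (LTZ * Δk + LTK) * m) :=
  stmt_4_general H εR εT LRS LRK LRZ LTZ LTK Δω Δk LTS hεT hLRS hLTZ hLTK hΔω hΔk hLTS0 hLTS1 δ hδ m
    hm r hr
end

section
/- Let H ≥ 1 be a natural number, let γ be a real number with 0 ≤ γ ≤ 1, and let ε_R, ε_T, L_RS, L_RK, L_RZ, L_TZ, L_TK, Δ_ω, Δ_k ≥ 0 and 0 ≤ L_TS < 1 be real numbers. Let δ : ℕ → ℝ satisfy δ(t) ∈ {0,1} for all t, set m = Σ_{t=1}^{H} δ(t), and let r : ℕ → ℝ satisfy r(t) ≥ 0 and r(t) ≤ ε_R + L_RK·δ(t) + L_RS · Σ_{i=0}^{t−2} L_TS^i · (ε_T + L_TZ·Δ_ω + (L_TZ·Δ_k + L_TK)·δ(t−1−i)) + L_RZ·(Δ_k + Δ_ω) for every t with 1 ≤ t ≤ H. Then Σ_{t=1}^{H} γ^{t−1}·r(t) ≤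 H·(ε_R + L_RZ·(Δ_k + Δ_ω)) + L_RK·m + (L_RS / (1 − L_TS)) · ( H·(ε_T + L_TZ·Δ_ω) + (L_TZ·Δ_k + L_TK)·m ). -/
/-!
Since `r ≥ 0` and `γ ^ (t - 1) ≤ 1`, the discount can be dropped. In the undiscounted sum the
transition-error term is a truncated convolution of the geometric weights `LTS ^ i` with the
per-step errors `εT + LTZ * Δω + (LTZ * Δk + LTK) * δ j`; being nonnegative, it is dominated by
the product of the two full sums, and the geometric factor is at most `1 / (1 - LTS)`.
-/

open Finset

theorem sum_pow_mul_le_sum {ι : Type*} (s : Finset ι) (e : ι → ℕ) {γ : ℝ} (hγ0 : 0 ≤ γ)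
    (hγ1 : γ ≤ 1) {f : ι → ℝ} (hf : ∀ i ∈ s, 0 ≤ f i) :
    ∑ i ∈ s, γ ^ e i * f i ≤ ∑ i ∈ s, f i :=
  sum_le_sum fun i hi => mul_le_of_le_one_left (hf i hi) (pow_le_one₀ hγ0 hγ1)

theorem sum_Icc_sum_range_sub_le_sum_range_sum_Icc {M : Type*} [AddCommMonoid M]
    [PartialOrder M] [IsOrderedAddMonoid M] {g : ℕ → ℕ → M} (hg : ∀ i j, 0 ≤ g i j) (N : ℕ) :
    ∑ t ∈ Icc 1 N, ∑ i ∈ range (t - 1), g i (t - 1 - i)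
      ≤ ∑ i ∈ range N, ∑ j ∈ Icc 1 N, g i j := by
  rw [sum_sigma', ← sum_product']
  rw [← sum_image (f := fun p : ℕ × ℕ => g p.1 p.2)
    (g := fun p : (_ : ℕ) × ℕ => (p.2, p.1 - 1 - p.2))]
  · refine sum_le_sum_of_subset_of_nonneg ?_ fun _ _ _ => hg _ _
    intro p hp
    obtain ⟨⟨t, i⟩, hti, rfl⟩ := mem_image.1 hp
    simp only [mem_sigma, mem_Icc, mem_range, mem_product] at hti ⊢
    omega
  · rintro ⟨t, i⟩ hti ⟨t', i'⟩ hti' heq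
    simp only [coe_sigma, Set.mem_sigma_iff, coe_Icc, Set.mem_Icc, coe_range, Set.mem_Iio,
      Prod.mk.injEq] at hti hti' heq
    obtain ⟨rfl, hsub⟩ := heq
    obtain rfl : t = t' := by omega
    rfl

theorem sum_Icc_sum_range_geom_mul_le {x : ℝ} (hx0 : 0 ≤ x) (hx1 : x < 1) {a : ℕ → ℝ}
    (ha : ∀ j, 0 ≤ a j) (N : ℕ) :
    ∑ t ∈ Icc 1 N, ∑ i ∈ range (t - 1), x ^ i * a (t - 1 - i)
      ≤ (∑ j ∈ Icc 1 N, a j) / (1 - x) := by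
  calc ∑ t ∈ Icc 1 N, ∑ i ∈ range (t - 1), x ^ i * a (t - 1 - i)
      ≤ ∑ i ∈ range N, ∑ j ∈ Icc 1 N, x ^ i * a j :=
        sum_Icc_sum_range_sub_le_sum_range_sum_Icc
          (fun i j => mul_nonneg (pow_nonneg hx0 i) (ha j)) N
    _ = (∑ i ∈ range N, x ^ i) * ∑ j ∈ Icc 1 N, a j := (sum_mul_sum _ _ _ _).symm
    _ ≤ 1 / (1 - x) * ∑ j ∈ Icc 1 N, a j := by
        gcongr
        · exact sum_nonneg fun j _ => ha j
        · simpa using geom_sum_Ico_le_of_lt_one (m := 0) (n := N) hx0 hx1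
    _ = (∑ j ∈ Icc 1 N, a j) / (1 - x) := by ring

theorem stmt_5_general (H : ℕ) (γ : ℝ) (hγ0 : 0 ≤ γ) (hγ1 : γ ≤ 1)
    (εR εT LRS LRK LRZ LTZ LTK Δω Δk LTS : ℝ)
    (hεT : 0 ≤ εT) (hLRS : 0 ≤ LRS)
    (hLTZ : 0 ≤ LTZ) (hLTK : 0 ≤ LTK)
    (hΔω : 0 ≤ Δω) (hΔk : 0 ≤ Δk) (hLTS0 : 0 ≤ LTS) (hLTS1 : LTS < 1)
    (δ : ℕ → ℝ) (hδ : ∀ t : ℕ, δ t = 0 ∨ δ t = 1)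
    (m : ℝ) (hm : m = ∑ t ∈ Finset.Icc 1 H, δ t)
    (r : ℕ → ℝ)
    (hr0 : ∀ t : ℕ, 1 ≤ t → t ≤ H → 0 ≤ r t)
    (hr : ∀ t : ℕ, 1 ≤ t → t ≤ H →
      r t ≤ εR + LRK * δ t
        + LRS * ∑ i ∈ Finset.range (t - 1),
            LTS ^ i * (εT + LTZ * Δω + (LTZ * Δk + LTK) * δ (t - 1 - i))
        + LRZ * (Δk + Δω)) :
    ∑ t ∈ Finset.Icc 1 H, γ ^ (t - 1) * r t
      ≤ H * (εR + LRZ * (Δk + Δω)) + LRK * m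
        + (LRS / (1 - LTS)) * (H * (εT + LTZ * Δω) + (LTZ * Δk + LTK) * m) := by
  set A := εT + LTZ * Δω
  set B := LTZ * Δk + LTK
  have herr_nonneg : ∀ j, 0 ≤ A + B * δ j := fun j => by
    have : 0 ≤ δ j := by rcases hδ j with h | h <;> simp [h]
    positivity
  have herr_sum : ∑ j ∈ Icc 1 H, (A + B * δ j) = H * A + B * m := by
    simp [sum_add_distrib, ← mul_sum, hm]
  calc ∑ t ∈ Icc 1 H, γ ^ (t - 1) * r t
      ≤ ∑ t ∈ Icc 1 H, r t :=
        sum_pow_mul_le_sum _ _ hγ0 hγ1 fun t ht => hr0 t (mem_Icc.1 ht).1 (mem_Icc.1 ht).2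
    _ ≤ ∑ t ∈ Icc 1 H, (εR + LRK * δ t
          + LRS * ∑ i ∈ range (t - 1), LTS ^ i * (A + B * δ (t - 1 - i)) + LRZ * (Δk + Δω)) :=
        sum_le_sum fun t ht => hr t (mem_Icc.1 ht).1 (mem_Icc.1 ht).2
    _ = H * (εR + LRZ * (Δk + Δω)) + LRK * m
          + LRS * ∑ t ∈ Icc 1 H, ∑ i ∈ range (t - 1), LTS ^ i * (A + B * δ (t - 1 - i)) := by
        simp only [sum_add_distrib, sum_const, Nat.card_Icc, ← mul_sum, hm, nsmul_eq_mul]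
        push_cast; ring
    _ ≤ H * (εR + LRZ * (Δk + Δω)) + LRK * m + LRS * ((H * A + B * m) / (1 - LTS)) := by
        gcongr
        exact herr_sum ▸ sum_Icc_sum_range_geom_mul_le hLTS0 hLTS1 herr_nonneg H
    _ = _ := by ring

/-- Discounted form of the regret bound in Theorem 5.2: the discounted sum of
nonnegative per-step reward differences over the planning horizon `H` is
bounded by the undiscounted (`γ = 1`) regret bound. -/
theorem stmt_5 (H : ℕ) (hH : 1 ≤ H) (γ : ℝ) (hγ0 : 0 ≤ γ) (hγ1 : γ ≤ 1)
    (εR εT LRS LRK LRZ LTZ LTK Δω Δk LTS : ℝ)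
    (hεR : 0 ≤ εR) (hεT : 0 ≤ εT) (hLRS : 0 ≤ LRS) (hLRK : 0 ≤ LRK)
    (hLRZ : 0 ≤ LRZ) (hLTZ : 0 ≤ LTZ) (hLTK : 0 ≤ LTK)
    (hΔω : 0 ≤ Δω) (hΔk : 0 ≤ Δk) (hLTS0 : 0 ≤ LTS) (hLTS1 : LTS < 1)
    (δ : ℕ → ℝ) (hδ : ∀ t : ℕ, δ t = 0 ∨ δ t = 1)
    (m : ℝ) (hm : m = ∑ t ∈ Finset.Icc 1 H, δ t)
    (r : ℕ → ℝ)
    (hr0 : ∀ t : ℕ, 1 ≤ t → t ≤ H → 0 ≤ r t)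
    (hr : ∀ t : ℕ, 1 ≤ t → t ≤ H →
      r t ≤ εR + LRK * δ t
        + LRS * ∑ i ∈ Finset.range (t - 1),
            LTS ^ i * (εT + LTZ * Δω + (LTZ * Δk + LTK) * δ (t - 1 - i))
        + LRZ * (Δk + Δω)) :
    ∑ t ∈ Finset.Icc 1 H, γ ^ (t - 1) * r t
      ≤ H * (εR + LRZ * (Δk + Δω)) + LRK * m
        + (LRS / (1 - LTS)) * (H * (εT + LTZ * Δω) + (LTZ * Δk + LTK) * m) :=
  stmt_5_general H γ hγ0 hγ1 εR εT LRS LRK LRZ LTZ LTK Δω Δk LTS hεT hLRS hLTZ hLTK hΔω hΔk hLTS0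
    hLTS1 δ hδ m hm r hr0 hr
end
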